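/- Let 𝓕 be the class of strategy-proof and individually rational mechanisms on [R̲,R̄], and 𝓕_fin ⊆ 𝓕 those with finite range. Suppose F* ∈ 𝓕_fin satisfies E[F*] ≥ E[G] for all G ∈ 𝓕_fin. Then E[F*] ≥ E[K] for all K ∈ 𝓕, i.e., F* is revenue-optimal among all strategy-proof and individually rational mechanisms. -/
import Mathlib


open Set MeasureTheory Filter Topology
open scoped ENNReal

noncomputable section

abbrev Bundle : Type := ℝ × ℝ

/-- The set of allocations Z = [0,∞) × [0,1]. -/
def Z : Set Bundle := {p | 0 ≤ p.1 ∧ p.2 ∈ Set.Icc (0:ℝ) 1}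

/-- A CM (continuous, monotone) preference on Z. -/
structure CMPref where
  R : Bundle → Bundle → Prop
  total : ∀ x ∈ Z, ∀ y ∈ Z, R x y ∨ R y x
  trans : ∀ x y z : Bundle, R x y → R y z → R x z
  moneyMono : ∀ t' t'' q : ℝ, (t', q) ∈ Z → (t'', q) ∈ Z → t' < t'' →
    R (t', q) (t'', q) ∧ ¬ R (t'', q) (t', q)
  qMono : ∀ t q' q'' : ℝ, (t, q') ∈ Z → (t, q'') ∈ Z → q' < q'' →
    R (t, q'') (t, q') ∧ ¬ R (t, q') (t, q'')
  contUC : ∀ z ∈ Z, IsClosed {x | x ∈ Z ∧ R x z}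
  contLC : ∀ z ∈ Z, IsClosed {x | x ∈ Z ∧ R z x}

/-- Indifference. -/
def CMPref.I (p : CMPref) (x y : Bundle) : Prop := p.R x y ∧ p.R y x

/-- Indifference class of x. -/
def IC (p : CMPref) (x : Bundle) : Set Bundle := {y | y ∈ Z ∧ p.I y x}

/-- Single-crossing property of two preferences. -/
def SingleCrossing (p p' : CMPref) : Prop :=
  ∀ x y z : Bundle, z ∈ IC p x ∩ IC p' y → IC p x ∩ IC p' y = {z}

/-- x ≤ y on bundles: equal, or strictly smaller in both coordinates. -/
def bleq (x y : Bundle) : Prop := x = y ∨ (x.1 < y.1 ∧ x.2 < y.2)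

/-- □(z) = bundles (in Z) below z. -/
def square (z : Bundle) : Set Bundle := {x | x ∈ Z ∧ bleq x z}

/-- Upper contour set within Z. -/
def UC (p : CMPref) (z : Bundle) : Set Bundle := {x | x ∈ Z ∧ p.R x z}

/-- p'' cuts p' from above at z. -/
def CutsAt (p' p'' : CMPref) (z : Bundle) : Prop :=
  square z ∩ UC p'' z ⊆ square z ∩ UC p' z

/-- p' ≺ p'' : p'' cuts p' from above at every bundle (and they are distinct). -/
def Prec (p' p'' : CMPref) : Prop := p' ≠ p'' ∧ ∀ z ∈ Z, CutsAt p' p'' z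

/-- p ≼ p'. -/
def PrecEq (p p' : CMPref) : Prop := Prec p p' ∨ p = p'

/-- Rich single-crossing domain. -/
def RichSC (D : Set CMPref) : Prop :=
  (∀ p ∈ D, ∀ p' ∈ D, p ≠ p' → SingleCrossing p p') ∧
  (∀ x ∈ Z, ∀ y ∈ Z, x.1 < y.1 → x.2 < y.2 → ∃ p ∈ D, p.I x y)

/-- Closed interval [a,b] within the domain D. -/
def OrdInterval (D : Set CMPref) (a b : CMPref) : Set CMPref :=
  {p | p ∈ D ∧ PrecEq a p ∧ PrecEq p b}

/-- Strategy-proofness on a set of preferences. -/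
def StrategyProofOn (S : Set CMPref) (F : CMPref → Bundle) : Prop :=
  ∀ p ∈ S, ∀ p' ∈ S, p.R (F p) (F p')

/-- Individual rationality on a set of preferences. -/
def IROn (S : Set CMPref) (F : CMPref → Bundle) : Prop :=
  ∀ p ∈ S, p.R (F p) ((0:ℝ), (0:ℝ))

section Auxiliary

lemma zeroZ : (((0:ℝ),(0:ℝ)) : Bundle) ∈ Z := ⟨le_refl 0, by norm_num, by norm_num⟩

lemma CMPref.refl' (p : CMPref) {a : Bundle} (ha : a ∈ Z) : p.R a a :=
  (p.total a ha a ha).elim id id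

lemma CMPref.total' (p : CMPref) {a b : Bundle} (ha : a ∈ Z) (hb : b ∈ Z)
    (h : ¬ p.R a b) : p.R b a :=
  (p.total a ha b hb).elim (fun h' => absurd h' h) id

/-- Monotonicity of preferences: cheaper and (weakly) more quantity is weakly better,
strictly if one comparison is strict. -/
lemma dom_pref (p : CMPref) {a b : Bundle} (ha : a ∈ Z) (hb : b ∈ Z)
    (ht : a.1 ≤ b.1) (hq : b.2 ≤ a.2) :
    p.R a b ∧ ((a.1 < b.1 ∨ b.2 < a.2) → ¬ p.R b a) := by
  have haa : ((a.1, a.2) : Bundle) = a := rfl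
  have hbb : ((b.1, b.2) : Bundle) = b := rfl
  have hcZ : ((a.1, b.2) : Bundle) ∈ Z := ⟨ha.1, hb.2⟩
  have hac : p.R a (a.1, b.2) ∧ (b.2 < a.2 → ¬ p.R (a.1, b.2) a) := by
    rcases eq_or_lt_of_le hq with h | h
    · have hcb : ((a.1, b.2) : Bundle) = a := by rw [h]
      rw [hcb]
      exact ⟨CMPref.refl' p ha, fun hlt => absurd h (ne_of_lt hlt)⟩
    · have h2 := p.qMono a.1 b.2 a.2 hcZ (by rw [haa]; exact ha) h
      rw [haa] at h2
      exact ⟨h2.1, fun _ => h2.2⟩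
  have hcb : p.R (a.1, b.2) b ∧ (a.1 < b.1 → ¬ p.R b (a.1, b.2)) := by
    rcases eq_or_lt_of_le ht with h | h
    · have hcb' : ((a.1, b.2) : Bundle) = b := by rw [h]
      rw [hcb']
      exact ⟨CMPref.refl' p hb, fun hlt => absurd h (ne_of_lt hlt)⟩
    · have h2 := p.moneyMono a.1 b.1 b.2 hcZ (by rw [hbb]; exact hb) h
      rw [hbb] at h2
      exact ⟨h2.1, fun _ => h2.2⟩
  refine ⟨p.trans _ _ _ hac.1 hcb.1, ?_⟩
  rintro (h | h) hba
  · exact hcb.2 h (p.trans _ _ _ hba hac.1)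
  · exact hac.2 h (p.trans _ _ _ hcb.1 hba)

/-- Single-crossing transfer: if the lower type weakly prefers `z` to a bundle `w`
strictly below `z`, then so does any higher type. -/
lemma transfer {p p' : CMPref} (hcuts : ∀ z ∈ Z, CutsAt p p' z) {z w : Bundle}
    (hz : z ∈ Z) (hw : w ∈ Z) (h1 : w.1 < z.1) (h2 : w.2 < z.2) (hR : p.R z w) :
    p'.R z w := by
  have hC : IsClosed {v : Bundle | v ∈ Z ∧ p'.R z v} := p'.contLC z hz
  set c := z.1 - w.1 with hc
  have hcpos : 0 < c := sub_pos.2 h1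
  have key : ∀ k : ℕ, ((w.1 + c / ((k:ℝ)+2), w.2) : Bundle) ∈ {v : Bundle | v ∈ Z ∧ p'.R z v} := by
    intro k
    have hden : (0:ℝ) < (k:ℝ) + 2 := by positivity
    have hdpos : 0 < c / ((k:ℝ)+2) := div_pos hcpos hden
    have hdlt : c / ((k:ℝ)+2) < c := by
      have hk : (0:ℝ) ≤ (k:ℝ) := Nat.cast_nonneg k
      exact div_lt_self hcpos (by linarith)
    have hvZ : ((w.1 + c / ((k:ℝ)+2), w.2) : Bundle) ∈ Z :=
      ⟨add_nonneg hw.1 hdpos.le, hw.2⟩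
    have hv1 : w.1 + c / ((k:ℝ)+2) < z.1 := by
      have : w.1 + c / ((k:ℝ)+2) < w.1 + c := by linarith
      simpa [hc] using this
    have hmm := p.moneyMono w.1 (w.1 + c / ((k:ℝ)+2)) w.2
      (by exact hw) hvZ (by linarith)
    have hnzw : ¬ p.R ((w.1 + c / ((k:ℝ)+2), w.2) : Bundle) w := by
      have := hmm.2
      simpa using this
    have hnz : ¬ p.R ((w.1 + c / ((k:ℝ)+2), w.2) : Bundle) z := by
      intro h
      exact hnzw (p.trans _ _ _ h hR)
    have hsq : ((w.1 + c / ((k:ℝ)+2), w.2) : Bundle) ∈ square z :=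
      ⟨hvZ, Or.inr ⟨hv1, h2⟩⟩
    have hnz' : ¬ p'.R ((w.1 + c / ((k:ℝ)+2), w.2) : Bundle) z := by
      intro h
      exact hnz ((hcuts z hz) ⟨hsq, ⟨hvZ, h⟩⟩).2.2
    exact ⟨hvZ, CMPref.total' p' hvZ hz hnz'⟩
  have h0 : Tendsto (fun k : ℕ => c / ((k:ℝ)+2)) atTop (𝓝 0) := by
    have h := (tendsto_const_div_atTop_nhds_zero_nat c).comp (tendsto_add_atTop_nat 2)
    have heq : (fun k : ℕ => c / ((k:ℝ)+2)) = (fun n : ℕ => c / (n:ℝ)) ∘ (fun a => a + 2) := by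
      funext k
      simp only [Function.comp_apply]
      push_cast
      ring
    rw [heq]
    exact h
  have htend : Tendsto (fun k : ℕ => ((w.1 + c / ((k:ℝ)+2), w.2) : Bundle)) atTop (𝓝 w) := by
    have h1' : Tendsto (fun k : ℕ => w.1 + c / ((k:ℝ)+2)) atTop (𝓝 (w.1 + 0)) :=
      tendsto_const_nhds.add h0
    rw [add_zero] at h1'
    have := h1'.prodMk_nhds (tendsto_const_nhds : Tendsto (fun _ : ℕ => w.2) atTop (𝓝 w.2))
    simpa using this
  exact (hC.mem_of_tendsto htend (Filter.Eventually.of_forall key)).2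

/-- Payments of a strategy-proof mechanism are monotone in the type. -/
lemma payment_mono {X : Type*} [LinearOrder X] {D : Set CMPref}
    (hD1 : ∀ p ∈ D, ∀ p' ∈ D, p ≠ p' → SingleCrossing p p')
    {e : X → CMPref} (he : ∀ x, e x ∈ D)
    (hord : ∀ x y : X, x < y → Prec (e x) (e y))
    {F : X → Bundle} (hFZ : ∀ x, F x ∈ Z) (hSP : ∀ x y, (e x).R (F x) (F y)) :
    Monotone fun x => (F x).1 := by
  intro x y hxy
  rcases eq_or_lt_of_le hxy with rfl | hlt
  · exact le_refl _
  by_contra hcon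
  push_neg at hcon
  have hq : (F y).2 < (F x).2 := by
    by_contra hq
    push_neg at hq
    exact ((dom_pref (e x) (hFZ y) (hFZ x) hcon.le hq).2 (Or.inl hcon)) (hSP x y)
  have hPrec := hord x y hlt
  have hxyR : (e x).R (F y) (F x) := by
    have hsq : F y ∈ square (F x) := ⟨hFZ y, Or.inr ⟨hcon, hq⟩⟩
    exact ((hPrec.2 (F x) (hFZ x)) ⟨hsq, ⟨hFZ y, hSP y x⟩⟩).2.2
  have hyxR : (e y).R (F x) (F y) :=
    transfer hPrec.2 (hFZ x) (hFZ y) hcon hq (hSP x y)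
  have hSC := hD1 (e x) (he x) (e y) (he y) hPrec.1
  have hzmem : F x ∈ IC (e x) (F x) ∩ IC (e y) (F x) :=
    ⟨⟨hFZ x, CMPref.refl' _ (hFZ x), CMPref.refl' _ (hFZ x)⟩,
     ⟨hFZ x, CMPref.refl' _ (hFZ x), CMPref.refl' _ (hFZ x)⟩⟩
  have heq := hSC (F x) (F x) (F x) hzmem
  have hymem : F y ∈ IC (e x) (F x) ∩ IC (e y) (F x) :=
    ⟨⟨hFZ y, hxyR, hSP x y⟩, ⟨hFZ y, hSP y x, hyxR⟩⟩
  rw [heq] at hymem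
  exact (ne_of_lt hcon) (congrArg Prod.fst hymem)

/-- Distinct bundles in the range of a strategy-proof mechanism are strictly ordered. -/
lemma range_strict {X : Type*} [LinearOrder X] {D : Set CMPref}
    (hD1 : ∀ p ∈ D, ∀ p' ∈ D, p ≠ p' → SingleCrossing p p')
    {e : X → CMPref} (he : ∀ x, e x ∈ D)
    (hord : ∀ x y : X, x < y → Prec (e x) (e y))
    {F : X → Bundle} (hFZ : ∀ x, F x ∈ Z) (hSP : ∀ x y, (e x).R (F x) (F y))
    {x y : X} (hxy : x ≤ y) (hne : F x ≠ F y) :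
    (F x).1 < (F y).1 ∧ (F x).2 < (F y).2 := by
  have tle : (F x).1 ≤ (F y).1 := payment_mono hD1 he hord hFZ hSP hxy
  have hq : (F x).2 < (F y).2 := by
    rcases lt_trichotomy (F x).2 (F y).2 with h | h | h
    · exact h
    · rcases eq_or_lt_of_le tle with h1 | h1
      · exact absurd (Prod.ext h1 h) hne
      · exact absurd (hSP y x)
          ((dom_pref (e y) (hFZ x) (hFZ y) tle h.ge).2 (Or.inl h1))
    · exact absurd (hSP y x)
        ((dom_pref (e y) (hFZ x) (hFZ y) tle h.le).2 (Or.inr h))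
  refine ⟨?_, hq⟩
  rcases eq_or_lt_of_le tle with h1 | h1
  · exact absurd (hSP x y)
      ((dom_pref (e x) (hFZ y) (hFZ x) h1.ge hq.le).2 (Or.inr hq))
  · exact h1

/-- A type `x` weakly prefers the bundle of a lower type `s` over the outside option
and over bundles of types at most `s`. -/
lemma prefer_menu {X : Type*} [LinearOrder X] {D : Set CMPref}
    (hD1 : ∀ p ∈ D, ∀ p' ∈ D, p ≠ p' → SingleCrossing p p')
    {e : X → CMPref} (he : ∀ x, e x ∈ D)
    (hord : ∀ x y : X, x < y → Prec (e x) (e y))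
    {F : X → Bundle} (hFZ : ∀ x, F x ∈ Z) (hSP : ∀ x y, (e x).R (F x) (F y))
    (hIR : ∀ x, (e x).R (F x) ((0:ℝ),(0:ℝ)))
    {s x : X} (hsx : s ≤ x) {w : Bundle}
    (hw : w = (((0:ℝ),(0:ℝ)) : Bundle) ∨ ∃ σ, σ ≤ s ∧ w = F σ) :
    (e x).R (F s) w := by
  rcases hw with rfl | ⟨σ, hσ, rfl⟩
  · rcases eq_or_lt_of_le hsx with rfl | hlt
    · exact hIR s
    · rcases eq_or_lt_of_le (hFZ s).1 with h1 | h1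
      · exact (dom_pref (e x) (hFZ s) zeroZ (by exact h1.ge) (hFZ s).2.1).1
      · rcases eq_or_lt_of_le (hFZ s).2.1 with h2 | h2
        · exact absurd (hIR s)
            ((dom_pref (e s) zeroZ (hFZ s) h1.le h2.ge).2 (Or.inl h1))
        · exact transfer (hord s x hlt).2 (hFZ s) zeroZ h1 h2 (hIR s)
  · by_cases heq : F σ = F s
    · rw [heq]
      exact CMPref.refl' _ (hFZ s)
    · have hst := range_strict hD1 he hord hFZ hSP hσ heq
      rcases eq_or_lt_of_le hsx with rfl | hlt
      · exact hSP s σ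
      · exact transfer (hord s x hlt).2 (hFZ s) (hFZ σ) hst.1 hst.2 (hSP s σ)

/-- In every finite menu of bundles there is a best element (with maximal payment
among best elements). -/
lemma exists_best_aux (p : CMPref) (A : Finset Bundle) (hne : A.Nonempty)
    (hAZ : ∀ a ∈ A, a ∈ Z) : ∃ b ∈ A, ∀ a ∈ A, p.R b a := by
  classical
  induction A using Finset.induction_on with
  | empty => exact absurd hne (by simp)
  | @insert c A hc ih =>
    have hcZ : c ∈ Z := hAZ c (Finset.mem_insert_self c A)
    by_cases hA : A.Nonempty
    · obtain ⟨b, hbA, hb⟩ := ih hA (fun a ha => hAZ a (Finset.mem_insert_of_mem ha))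
      have hbZ : b ∈ Z := hAZ b (Finset.mem_insert_of_mem hbA)
      rcases p.total b hbZ c hcZ with h | h
      · refine ⟨b, Finset.mem_insert_of_mem hbA, fun a ha => ?_⟩
        rcases Finset.mem_insert.1 ha with rfl | ha
        · exact h
        · exact hb a ha
      · refine ⟨c, Finset.mem_insert_self c A, fun a ha => ?_⟩
        rcases Finset.mem_insert.1 ha with rfl | ha
        · exact CMPref.refl' p hcZ
        · exact p.trans _ _ _ h (hb a ha)
    · have hAe : A = ∅ := Finset.not_nonempty_iff_eq_empty.1 hA
      subst hAe
      refine ⟨c, Finset.mem_insert_self c ∅, fun a ha => ?_⟩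
      rcases Finset.mem_insert.1 ha with rfl | ha
      · exact CMPref.refl' p hcZ
      · simp at ha

lemma exists_best (p : CMPref) (A : Finset Bundle) (hne : A.Nonempty)
    (hAZ : ∀ a ∈ A, a ∈ Z) :
    ∃ b, b ∈ A ∧ (∀ a ∈ A, p.R b a) ∧
      ∀ a ∈ A, (∀ a' ∈ A, p.R a a') → a.1 ≤ b.1 := by
  classical
  obtain ⟨b0, hb0A, hb0⟩ := exists_best_aux p A hne hAZ
  have hb0m : b0 ∈ A.filter (fun a => ∀ a' ∈ A, p.R a a') :=
    Finset.mem_filter.2 ⟨hb0A, hb0⟩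
  obtain ⟨m, hmA, hm⟩ := Finset.exists_max_image
    (A.filter (fun a => ∀ a' ∈ A, p.R a a')) (fun a => a.1) ⟨b0, hb0m⟩
  have hmf := Finset.mem_filter.1 hmA
  exact ⟨m, hmf.1, hmf.2, fun a ha hbest => hm a (Finset.mem_filter.2 ⟨ha, hbest⟩)⟩

/-- The finite "menu mechanism" built from the bundles of a finite set of types
(plus the outside option): it is SP, IR, finite-range and extracts at least the
payment of the reference type `sel x`. -/
lemma menu_mech {X : Type*} [LinearOrder X] {D : Set CMPref}
    (hD1 : ∀ p ∈ D, ∀ p' ∈ D, p ≠ p' → SingleCrossing p p')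
    {e : X → CMPref} (he : ∀ x, e x ∈ D)
    (hord : ∀ x y : X, x < y → Prec (e x) (e y))
    {K : X → Bundle} (hKZ : ∀ x, K x ∈ Z) (hKSP : ∀ x y, (e x).R (K x) (K y))
    (hKIR : ∀ x, (e x).R (K x) ((0:ℝ),(0:ℝ)))
    (S : Finset X) (sel : X → X) (hselmem : ∀ x, sel x ∈ S) (hselle : ∀ x, sel x ≤ x)
    (hselmax : ∀ x s, s ∈ S → s ≤ x → s ≤ sel x) :
    ∃ G : X → Bundle, (∀ x, G x ∈ Z) ∧ (∀ x y, (e x).R (G x) (G y)) ∧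
      (∀ x, (e x).R (G x) ((0:ℝ),(0:ℝ))) ∧ (Set.range G).Finite ∧
      ∀ x, (K (sel x)).1 ≤ (G x).1 := by
  classical
  set A : Finset Bundle := insert (((0:ℝ),(0:ℝ)) : Bundle) (S.image K) with hA
  have hAZ : ∀ a ∈ A, a ∈ Z := by
    intro a ha
    rcases Finset.mem_insert.1 ha with rfl | ha
    · exact zeroZ
    · obtain ⟨σ, _, rfl⟩ := Finset.mem_image.1 ha
      exact hKZ σ
  have hAne : A.Nonempty := ⟨_, Finset.mem_insert_self _ _⟩
  choose G hGA hGbest hGtie using fun x => exists_best (e x) A hAne hAZ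
  have tmono : Monotone fun x => (K x).1 := payment_mono hD1 he hord hKZ hKSP
  refine ⟨G, fun x => hAZ _ (hGA x), fun x y => hGbest x _ (hGA y),
    fun x => hGbest x _ (Finset.mem_insert_self _ _),
    Set.Finite.subset A.finite_toSet (by rintro _ ⟨x, rfl⟩; exact hGA x),
    fun x => ?_⟩
  have hKselA : K (sel x) ∈ A :=
    Finset.mem_insert_of_mem (Finset.mem_image_of_mem K (hselmem x))
  rcases Finset.mem_insert.1 (hGA x) with h0 | himg
  · refine hGtie x _ hKselA (fun a ha => (e x).trans _ _ _ ?_ (hGbest x a ha))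
    rw [h0]
    exact prefer_menu hD1 he hord hKZ hKSP hKIR (hselle x) (Or.inl rfl)
  · obtain ⟨σ, hσS, hσ⟩ := Finset.mem_image.1 himg
    by_cases hσx : σ ≤ x
    · refine hGtie x _ hKselA (fun a ha => (e x).trans _ _ _ ?_ (hGbest x a ha))
      rw [← hσ]
      exact prefer_menu hD1 he hord hKZ hKSP hKIR (hselle x)
        (Or.inr ⟨σ, hselmax x σ hσS hσx, rfl⟩)
    · push_neg at hσx
      calc (K (sel x)).1 ≤ (K x).1 := tmono (hselle x)
        _ ≤ (K σ).1 := tmono hσx.le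
        _ = (G x).1 := by rw [hσ]

/-- Maximal selection below `x` from a finite set containing `⊥`. -/
lemma exists_sel {X : Type*} [CompleteLinearOrder X] (S : Finset X) (hbot : ⊥ ∈ S) :
    ∃ sel : X → X, (∀ x, sel x ∈ S) ∧ (∀ x, sel x ≤ x) ∧
      (∀ x s, s ∈ S → s ≤ x → s ≤ sel x) := by
  classical
  have hne : ∀ x : X, (S.filter (fun s => s ≤ x)).Nonempty :=
    fun x => ⟨⊥, Finset.mem_filter.2 ⟨hbot, bot_le⟩⟩
  refine ⟨fun x => (S.filter (fun s => s ≤ x)).max' (hne x), fun x => ?_, fun x => ?_,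
    fun x s hs hsx => ?_⟩
  · exact (Finset.mem_filter.1 (Finset.max'_mem _ (hne x))).1
  · exact (Finset.mem_filter.1 (Finset.max'_mem _ (hne x))).2
  · exact Finset.le_max' (S.filter (fun s' => s' ≤ x)) s (Finset.mem_filter.2 ⟨hs, hsx⟩)

end Auxiliary


theorem stmt14 {X : Type*} [CompleteLinearOrder X] [DenselyOrdered X]
    [TopologicalSpace X] [OrderTopology X] [TopologicalSpace.MetrizableSpace X]
    [MeasurableSpace X] [BorelSpace X] (μ : Measure X) [IsProbabilityMeasure μ]
    (hnt : ∀ A : Set X, A.OrdConnected → (∃ x ∈ A, ∃ y ∈ A, x ≠ y) → 0 < μ A)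
    (hcont : ∀ A : Set X, MeasurableSet A → ∀ c : ℝ≥0∞, 0 < c → c < μ A →
      ∃ B ⊆ A, MeasurableSet B ∧ μ B = c)
    (D : Set CMPref) (hD : RichSC D) (e : X → CMPref) (he : ∀ x, e x ∈ D)
    (hord : ∀ x y : X, x < y ↔ Prec (e x) (e y))
    (Fstar : X → Bundle) (hFZ : ∀ x, Fstar x ∈ Z)
    (hSP : ∀ x y : X, (e x).R (Fstar x) (Fstar y))
    (hIR : ∀ x, (e x).R (Fstar x) ((0:ℝ), (0:ℝ)))
    (hfin : (Set.range Fstar).Finite)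
    (hopt : ∀ G : X → Bundle, (∀ x, G x ∈ Z) →
      (∀ x y : X, (e x).R (G x) (G y)) →
      (∀ x, (e x).R (G x) ((0:ℝ), (0:ℝ))) →
      (Set.range G).Finite →
      (∫ x, (G x).1 ∂μ) ≤ ∫ x, (Fstar x).1 ∂μ)
    (K : X → Bundle) (hKZ : ∀ x, K x ∈ Z)
    (hKSP : ∀ x y : X, (e x).R (K x) (K y))
    (hKIR : ∀ x, (e x).R (K x) ((0:ℝ), (0:ℝ))) :
    (∫ x, (K x).1 ∂μ) ≤ ∫ x, (Fstar x).1 ∂μ := by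
  classical
  have hord' : ∀ x y : X, x < y → Prec (e x) (e y) := fun x y h => (hord x y).1 h
  set t : X → ℝ := fun x => (K x).1 with ht
  have tmono : Monotone t := payment_mono hD.1 he hord' hKZ hKSP
  have ht0 : ∀ x, 0 ≤ t x := fun x => (hKZ x).1
  have htM : ∀ x, t x ≤ t ⊤ := fun x => tmono le_top
  -- a countable dense set
  obtain ⟨D₀, hD₀c, hD₀d⟩ : ∃ s : Set X, s.Countable ∧ Dense s := by
    letI : MetricSpace X := TopologicalSpace.metrizableSpaceMetric X
    obtain ⟨c, hc, hsub⟩ := (isCompact_univ : IsCompact (Set.univ : Set X)).isSeparable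
    exact ⟨c, hc, fun x => hsub (Set.mem_univ x)⟩
  -- atoms of μ are countable
  have hatoms : {x : X | μ {x} ≠ 0}.Countable := by
    have h := MeasureTheory.Measure.countable_meas_pos_of_disjoint_of_meas_iUnion_ne_top
      (α := X) μ (As := fun x : X => {x}) (fun x => measurableSet_singleton x)
      (fun x y hxy => Set.disjoint_singleton.2 hxy)
      (by rw [Set.iUnion_of_singleton]; exact measure_ne_top μ _)
    have : {x : X | μ {x} ≠ 0} = {x : X | 0 < μ {x}} := by
      ext x; simp [pos_iff_ne_zero]
    rw [this]
    exact h
  -- enumerate the countable set D₀ ∪ atoms ∪ {⊥}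
  obtain ⟨d, hd⟩ : ∃ d : ℕ → X, D₀ ∪ {x : X | μ {x} ≠ 0} ∪ {⊥} = Set.range d :=
    ((hD₀c.union hatoms).union (Set.countable_singleton _)).exists_eq_range
      ⟨⊥, Or.inr rfl⟩
  -- the finite sets of types and selections
  set S : ℕ → Finset X := fun n => insert ⊥ ((Finset.range n).image d) with hS
  have hmemS : ∀ (s : X) (n : ℕ), s ∈ S n ↔ s = ⊥ ∨ ∃ k, k < n ∧ d k = s := by
    intro s n
    simp only [hS, Finset.mem_insert, Finset.mem_image, Finset.mem_range]
  have hbotS : ∀ n, ⊥ ∈ S n := fun n => (hmemS ⊥ n).2 (Or.inl rfl)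
  have hSsub : ∀ m n : ℕ, m ≤ n → S m ⊆ S n := by
    intro m n hmn s hs
    rcases (hmemS s m).1 hs with h | ⟨k, hk, hks⟩
    · exact (hmemS s n).2 (Or.inl h)
    · exact (hmemS s n).2 (Or.inr ⟨k, lt_of_lt_of_le hk hmn, hks⟩)
  choose sel hselmem hselle hselmax using fun n => exists_sel (S n) (hbotS n)
  -- the menu mechanisms
  choose G hGZ hGSP hGIR hGfin hGbd using fun n =>
    menu_mech hD.1 he hord' hKZ hKSP hKIR (S n) (sel n) (hselmem n) (hselle n) (hselmax n)
  -- basic monotonicity facts about the selections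
  have hsel_mono : ∀ n, Monotone (sel n) := by
    intro n x y hxy
    exact hselmax n y (sel n x) (hselmem n x) ((hselle n x).trans hxy)
  -- integrability of monotone functions
  have int_mono : ∀ f : X → ℝ, Monotone f → Integrable f μ := fun f hf =>
    (integrable_const (max |f ⊥| |f ⊤|)).mono' (hf.measurable.aestronglyMeasurable)
      (Filter.Eventually.of_forall fun x => by
        rw [Real.norm_eq_abs]
        exact abs_le_max_abs_abs (hf bot_le) (hf le_top))
  -- per n, the integral bound
  have hIn : ∀ n, (∫ x, t (sel n x) ∂μ) ≤ ∫ x, (Fstar x).1 ∂μ := by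
    intro n
    have hint_f : Integrable (fun x => t (sel n x)) μ :=
      int_mono _ (tmono.comp (hsel_mono n))
    have hGmono : Monotone fun x => (G n x).1 :=
      payment_mono hD.1 he hord' (hGZ n) (hGSP n)
    have hint_g : Integrable (fun x => (G n x).1) μ := int_mono _ hGmono
    calc (∫ x, t (sel n x) ∂μ) ≤ ∫ x, (G n x).1 ∂μ :=
          integral_mono hint_f hint_g (fun x => hGbd n x)
      _ ≤ ∫ x, (Fstar x).1 ∂μ := hopt (G n) (hGZ n) (hGSP n) (hGIR n) (hGfin n)
  -- the supremum of menu payments below x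
  set T : X → Set ℝ := fun x => t '' {y | y ∈ Set.range d ∧ y ≤ x} with hT
  have hbotr : (⊥ : X) ∈ Set.range d := by
    rw [← hd]; exact Or.inr rfl
  have hTne : ∀ x, (T x).Nonempty := fun x => ⟨t ⊥, ⟨⊥, ⟨hbotr, bot_le⟩, rfl⟩⟩
  have hTbdd : ∀ x, BddAbove (T x) := by
    intro x
    refine ⟨t x, ?_⟩
    rintro v ⟨y, ⟨hy, hyx⟩, rfl⟩
    exact tmono hyx
  set g : X → ℝ := fun x => sSup (T x) with hg
  have hgle : ∀ x, g x ≤ t x := by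
    intro x
    refine csSup_le (hTne x) ?_
    rintro v ⟨y, ⟨hy, hyx⟩, rfl⟩
    exact tmono hyx
  set N : Set X := {x | g x < t x} with hN
  -- pointwise convergence off N
  have htend : ∀ x ∉ N, Tendsto (fun n => t (sel n x)) atTop (𝓝 (t x)) := by
    intro x hx
    have hge : t x ≤ g x := not_lt.1 hx
    have hmono : Monotone fun n => t (sel n x) := by
      intro m n hmn
      exact tmono (hselmax n x (sel m x) (hSsub m n hmn (hselmem m x)) (hselle m x))
    have hbdd : BddAbove (Set.range fun n => t (sel n x)) := by
      refine ⟨t x, ?_⟩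
      rintro v ⟨n, rfl⟩
      exact tmono (hselle n x)
    have hlim := tendsto_atTop_ciSup hmono hbdd
    have heq : (⨆ n, t (sel n x)) = t x := by
      apply le_antisymm
      · exact ciSup_le fun n => tmono (hselle n x)
      · refine le_trans hge (csSup_le (hTne x) ?_)
        rintro v ⟨y, ⟨⟨k, rfl⟩, hyx⟩, rfl⟩
        have h1 : d k ∈ S (k+1) :=
          (hmemS (d k) (k+1)).2 (Or.inr ⟨k, Nat.lt_succ_self k, rfl⟩)
        have h2 : t (d k) ≤ t (sel (k+1) x) :=
          tmono (hselmax (k+1) x (d k) h1 hyx)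
        exact h2.trans (le_ciSup hbdd (k+1))
    rwa [heq] at hlim
  -- N avoids the range of d
  have hNd : ∀ x ∈ N, x ∉ Set.range d := by
    intro x hx hxd
    have hmem : t x ∈ T x := ⟨x, ⟨hxd, le_refl x⟩, rfl⟩
    exact absurd (le_csSup (hTbdd x) hmem) (not_le.2 hx)
  -- N is countable
  have horder : ∀ x ∈ N, ∀ y ∈ N, x < y → t x ≤ g y := by
    intro x hx y hy hxy
    obtain ⟨d₀, hd₀, hd₀'⟩ := hD₀d.exists_mem_open isOpen_Ioo (Set.nonempty_Ioo.2 hxy)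
    have hd₀r : d₀ ∈ Set.range d := by
      rw [← hd]; exact Or.inl (Or.inl hd₀)
    have hmem : t d₀ ∈ T y := ⟨d₀, ⟨hd₀r, hd₀'.2.le⟩, rfl⟩
    exact (tmono hd₀'.1.le).trans (le_csSup (hTbdd y) hmem)
  have hqex : ∀ x : X, ∃ qq : ℚ, x ∈ N → (g x < (qq:ℝ) ∧ (qq:ℝ) < t x) := by
    intro x
    by_cases hx : x ∈ N
    · obtain ⟨qq, h1, h2⟩ := exists_rat_btwn (show g x < t x from hx)
      exact ⟨qq, fun _ => ⟨h1, h2⟩⟩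
    · exact ⟨0, fun h => absurd h hx⟩
  choose q hqspec using hqex
  have hNcount : N.Countable := by
    rw [← Set.countable_coe_iff]
    refine Function.Injective.countable (f := fun x : N => q x) ?_
    rintro ⟨x, hx⟩ ⟨y, hy⟩ hxy
    simp only at hxy
    by_contra hne
    have hne' : x ≠ y := fun h => hne (Subtype.ext h)
    rcases hne'.lt_or_gt with h | h
    · have h1 := (hqspec x hx).2
      have h2 := (hqspec y hy).1
      rw [hxy] at h1
      exact lt_irrefl _ ((h1.trans_le (horder x hx y hy h)).trans h2)
    · have h1 := (hqspec y hy).2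
      have h2 := (hqspec x hx).1
      rw [← hxy] at h1
      exact lt_irrefl _ ((h1.trans_le (horder y hy x hx h)).trans h2)
  -- N is null
  have hNnull : μ N = 0 := by
    have hsing : ∀ x ∈ N, μ {x} = 0 := by
      intro x hx
      by_contra hmu
      exact hNd x hx (by rw [← hd]; exact Or.inl (Or.inr hmu))
    calc μ N = μ (⋃ x ∈ N, {x}) := by rw [Set.biUnion_of_singleton]
      _ = 0 := (measure_biUnion_null_iff hNcount).2 hsing
  -- dominated convergence
  have hdom : Tendsto (fun n => ∫ x, t (sel n x) ∂μ) atTop (𝓝 (∫ x, t x ∂μ)) := by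
    refine tendsto_integral_of_dominated_convergence (fun _ => t ⊤)
      (fun n => ((tmono.comp (hsel_mono n)).measurable).aestronglyMeasurable)
      (integrable_const _)
      (fun n => Filter.Eventually.of_forall fun x => ?_)
      ?_
    · rw [Real.norm_eq_abs, abs_of_nonneg (ht0 _)]
      exact htM _
    · have hae : ∀ᵐ x ∂μ, x ∉ N := by
        rw [ae_iff]
        simpa using hNnull
      exact hae.mono fun x hx => htend x hx
  exact le_of_tendsto hdom (Filter.Eventually.of_forall hIn)
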